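/- Fix L ∈ ℕ and consider, over all real x, the product U(x) = V₀ · ∏_{j=1}^{L} diag(e^{-ix_j λ₀}, e^{-ix_j λ₁}) V_j with λ₀ = 1/2, λ₁ = -1/2, where x₁,...,x_L are coordinates of a vector x ∈ ℝᵈ each appearing exactly K = L/d times, and V_j are fixed 2×2 complex matrices. Then for any 2×2 matrix M, the function f(x) = ⟨0| U(x)† M U(x) |0⟩ can be written as f(x) = Σ_{ω ∈ Ω} c_ω e^{i ω·x}, where Ω = {-K, ..., 0, ..., K}ᵈ and c_ω ∈ ℂ depend only on the V_j and M. -/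

import Mathlib

/-!
Since `R_Z(t) = e^{-it/2} diag(1, e^{it})` and the global phases have modulus one, they cancel
in `U† M U`. Without them, every entry of the circuit matrix is a trigonometric polynomial with
frequencies in the box `[0, K]ᵈ`, because each factor `diag(1, e^{i x_m})` raises the upper bound
in coordinate `m` by one; its adjoint has frequencies in `[-K, 0]ᵈ`, and multiplying trigonometric
polynomials adds their frequency boxes.
-/

open Complex Matrix

noncomputable def RZenc (t : ℝ) : Matrix (Fin 2) (Fin 2) ℂ :=
  !![Complex.exp (-(Complex.I * t) / 2), 0; 0, Complex.exp (Complex.I * t / 2)]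

section TrigPoly

variable {ι : Type*} [Fintype ι]

noncomputable def trigMonomial (ω : ι → ℤ) (x : ι → ℝ) : ℂ :=
  exp (I * ∑ m, (ω m : ℂ) * (x m : ℂ))

lemma trigMonomial_zero : trigMonomial (0 : ι → ℤ) = 1 := by
  ext x; simp [trigMonomial]

lemma trigMonomial_add (ω ν : ι → ℤ) :
    trigMonomial (ω + ν) = trigMonomial ω * trigMonomial ν := by
  ext x
  simp only [trigMonomial, Pi.mul_apply, ← exp_add, Pi.add_apply, Int.cast_add, add_mul,
    Finset.sum_add_distrib, mul_add]

lemma star_trigMonomial (ω : ι → ℤ) : star (trigMonomial ω) = trigMonomial (-ω) := by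
  ext x
  simp [trigMonomial, ← exp_conj, map_sum, Finset.sum_neg_distrib]

lemma trigMonomial_single [DecidableEq ι] (m : ι) (x : ι → ℝ) :
    trigMonomial (Pi.single m 1) x = exp (I * x m) := by
  simp [trigMonomial, Pi.single_apply]

variable (ι) in
noncomputable def trigPoly (lo hi : ι → ℤ) : Submodule ℂ ((ι → ℝ) → ℂ) :=
  Submodule.span ℂ (trigMonomial '' Set.Icc lo hi)

lemma trigMonomial_mem_trigPoly {lo hi ω : ι → ℤ} (h : ω ∈ Set.Icc lo hi) :
    trigMonomial ω ∈ trigPoly ι lo hi :=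
  Submodule.subset_span ⟨ω, h, rfl⟩

lemma const_mem_trigPoly {lo hi : ι → ℤ} (hlo : lo ≤ 0) (hhi : 0 ≤ hi) (a : ℂ) :
    (fun _ => a) ∈ trigPoly ι lo hi := by
  have : (fun _ => a) = a • trigMonomial (0 : ι → ℤ) := by
    ext; simp [trigMonomial_zero]
  rw [this]
  exact Submodule.smul_mem _ a (trigMonomial_mem_trigPoly ⟨hlo, hhi⟩)

lemma trigPoly_mul_le (lo hi lo' hi' : ι → ℤ) :
    trigPoly ι lo hi * trigPoly ι lo' hi' ≤ trigPoly ι (lo + lo') (hi + hi') := by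
  rw [trigPoly, trigPoly, Submodule.span_mul_span]
  refine Submodule.span_mono ?_
  rintro _ ⟨_, ⟨ω, hω, rfl⟩, _, ⟨ν, hν, rfl⟩, rfl⟩
  exact ⟨ω + ν, Set.Icc_add_Icc_subset _ _ _ _ (Set.add_mem_add hω hν), trigMonomial_add ω ν⟩

lemma mul_mem_trigPoly {lo hi lo' hi' : ι → ℤ} {f g : (ι → ℝ) → ℂ}
    (hf : f ∈ trigPoly ι lo hi) (hg : g ∈ trigPoly ι lo' hi') :
    f * g ∈ trigPoly ι (lo + lo') (hi + hi') :=
  trigPoly_mul_le lo hi lo' hi' (Submodule.mul_mem_mul hf hg)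

lemma star_mem_trigPoly {lo hi : ι → ℤ} {f : (ι → ℝ) → ℂ} (hf : f ∈ trigPoly ι lo hi) :
    star f ∈ trigPoly ι (-hi) (-lo) := by
  induction hf using Submodule.span_induction with
  | mem _ h =>
    obtain ⟨ω, ⟨hlo, hhi⟩, rfl⟩ := h
    rw [star_trigMonomial]
    exact trigMonomial_mem_trigPoly ⟨neg_le_neg hhi, neg_le_neg hlo⟩
  | zero => simp
  | add f g _ _ hf hg => rw [star_add]; exact add_mem hf hg
  | smul a f _ hf => rw [star_smul]; exact Submodule.smul_mem _ _ hf

lemma exists_eq_sum_of_mem_trigPoly [DecidableEq ι] {lo hi : ι → ℤ} {f : (ι → ℝ) → ℂ}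
    (hf : f ∈ trigPoly ι lo hi) :
    ∃ c : (ι → ℤ) → ℂ, ∀ x, f x = ∑ ω ∈ Finset.Icc lo hi, c ω * trigMonomial ω x := by
  rw [trigPoly, ← Finset.coe_Icc, Finsupp.mem_span_image_iff_linearCombination] at hf
  obtain ⟨c, hc, rfl⟩ := hf
  refine ⟨c, fun x => ?_⟩
  rw [Finsupp.linearCombination_apply_of_mem_supported ℂ hc, Finset.sum_apply]
  rfl

def TrigPolyEntries {k n : Type*} (lo hi : ι → ℤ) (A : (ι → ℝ) → Matrix k n ℂ) : Prop :=
  ∀ i j, (fun x => A x i j) ∈ trigPoly ι lo hi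

end TrigPoly

namespace TrigPolyEntries

variable {ι : Type*} [Fintype ι] {k n p : Type*} {lo hi lo' hi' : ι → ℤ}

lemma const (A : Matrix k n ℂ) : TrigPolyEntries (0 : ι → ℤ) 0 fun _ => A :=
  fun i j => const_mem_trigPoly le_rfl le_rfl (A i j)

lemma mul [Fintype n] {A : (ι → ℝ) → Matrix k n ℂ} {B : (ι → ℝ) → Matrix n p ℂ}
    (hA : TrigPolyEntries lo hi A) (hB : TrigPolyEntries lo' hi' B) :
    TrigPolyEntries (lo + lo') (hi + hi') fun x => A x * B x := by
  intro i j
  have : (fun x => (A x * B x) i j) = ∑ l, (fun x => A x i l) * fun x => B x l j := by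
    ext x; simp [Matrix.mul_apply]
  rw [this]
  exact Submodule.sum_mem _ fun l _ => mul_mem_trigPoly (hA i l) (hB l j)

lemma mul_const [Fintype n] {A : (ι → ℝ) → Matrix k n ℂ} (hA : TrigPolyEntries lo hi A)
    (B : Matrix n p ℂ) : TrigPolyEntries lo hi fun x => A x * B := by
  simpa using hA.mul (const B)

lemma const_mul [Fintype n] {B : (ι → ℝ) → Matrix n p ℂ} (A : Matrix k n ℂ)
    (hB : TrigPolyEntries lo hi B) : TrigPolyEntries lo hi fun x => A * B x := by
  simpa using (const A).mul hB

lemma conjTranspose {A : (ι → ℝ) → Matrix k n ℂ} (hA : TrigPolyEntries lo hi A) :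
    TrigPolyEntries (-hi) (-lo) fun x => (A x)ᴴ :=
  fun i j => star_mem_trigPoly (hA j i)

lemma listProd_ofFn [Fintype n] [DecidableEq n] {L : ℕ} {lo hi : Fin L → ι → ℤ}
    {A : Fin L → (ι → ℝ) → Matrix n n ℂ} (hA : ∀ j, TrigPolyEntries (lo j) (hi j) (A j)) :
    TrigPolyEntries (∑ j, lo j) (∑ j, hi j) fun x => (List.ofFn fun j => A j x).prod := by
  induction L with
  | zero => simpa using const (1 : Matrix n n ℂ)
  | succ L ih =>
    simp only [List.ofFn_succ, List.prod_cons, Fin.sum_univ_succ]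
    exact (hA 0).mul (ih fun j => hA j.succ)

end TrigPolyEntries

noncomputable def rzDiag (t : ℝ) : Matrix (Fin 2) (Fin 2) ℂ :=
  diagonal ![1, exp (I * t)]

lemma RZenc_eq_smul_rzDiag (t : ℝ) : RZenc t = exp (-(I * t) / 2) • rzDiag t := by
  ext i j
  fin_cases i <;> fin_cases j <;> simp [RZenc, rzDiag, ← exp_add]
  ring_nf

lemma listProd_ofFn_RZenc_mul {L : ℕ} (t : Fin L → ℝ) (W : Fin L → Matrix (Fin 2) (Fin 2) ℂ) :
    (List.ofFn fun j => RZenc (t j) * W j).prod =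
      exp (-(I * ↑(∑ j, t j)) / 2) • (List.ofFn fun j => rzDiag (t j) * W j).prod := by
  induction L with
  | zero => simp
  | succ L ih =>
    rw [List.ofFn_succ, List.prod_cons, ih, RZenc_eq_smul_rzDiag, mul_smul_comm]
    simp only [smul_mul_assoc, smul_smul, ← exp_add, List.ofFn_succ, List.prod_cons,
      Fin.sum_univ_succ]
    congr 2
    push_cast
    ring

lemma trigPolyEntries_rzDiag_mul {ι : Type*} [Fintype ι] [DecidableEq ι] (m : ι)
    (W : Matrix (Fin 2) (Fin 2) ℂ) :
    TrigPolyEntries 0 (Pi.single m 1) fun x => rzDiag (x m) * W := by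
  refine TrigPolyEntries.mul_const (fun i j => ?_) W
  have h0 : (0 : ι → ℤ) ≤ Pi.single m 1 := Pi.single_nonneg.2 zero_le_one
  fin_cases i <;> fin_cases j
  · exact const_mem_trigPoly le_rfl h0 1
  · exact const_mem_trigPoly le_rfl h0 0
  · exact const_mem_trigPoly le_rfl h0 0
  · have : (fun x => rzDiag (x m) 1 1) = trigMonomial (Pi.single m 1) := by
      ext x; simp [rzDiag, trigMonomial_single]
    exact this ▸ trigMonomial_mem_trigPoly ⟨h0, le_rfl⟩

lemma conjTranspose_smul_mul_mul_smul {n : Type*} [Fintype n] {u : ℂ} (hu : star u * u = 1)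
    (B : Matrix n n ℂ) (M : Matrix n n ℂ) : (u • B)ᴴ * M * (u • B) = Bᴴ * M * B := by
  rw [conjTranspose_smul, smul_mul, smul_mul, Matrix.mul_smul, smul_smul, hu, one_smul]

theorem stmt15_general (d K L : ℕ) (idx : Fin L → Fin d)
    (hidx : ∀ m : Fin d, (Finset.univ.filter fun j : Fin L => idx j = m).card = K)
    (V : Fin (L + 1) → Matrix (Fin 2) (Fin 2) ℂ) (M : Matrix (Fin 2) (Fin 2) ℂ) :
    ∃ c : (Fin d → ℤ) → ℂ,
      ∀ x : Fin d → ℝ,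
        (((V 0 * (List.ofFn fun j : Fin L => RZenc (x (idx j)) * V j.succ).prod)ᴴ * M *
              (V 0 * (List.ofFn fun j : Fin L => RZenc (x (idx j)) * V j.succ).prod)) 0 0) =
          ∑ ω ∈ Finset.Icc (fun _ : Fin d => -(K : ℤ)) (fun _ : Fin d => (K : ℤ)),
            c ω * Complex.exp (Complex.I * (∑ m : Fin d, (ω m : ℂ) * (x m : ℂ))) := by
  have hcount : ∑ j, Pi.single (idx j) (1 : ℤ) = fun _ => (K : ℤ) := by
    ext m
    simp [Finset.sum_apply, Pi.single_apply, eq_comm (a := m), hidx]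
  have hB : TrigPolyEntries 0 (fun _ => (K : ℤ))
      fun x => V 0 * (List.ofFn fun j => rzDiag (x (idx j)) * V j.succ).prod := by
    have := TrigPolyEntries.listProd_ofFn fun j => trigPolyEntries_rzDiag_mul (idx j) (V j.succ)
    simpa [hcount] using this.const_mul (V 0)
  have hf := (hB.conjTranspose.mul_const M).mul hB 0 0
  simp only [neg_zero, add_zero, zero_add] at hf
  obtain ⟨c, hc⟩ := exists_eq_sum_of_mem_trigPoly hf
  have hphase (s : ℝ) : star (exp (-(I * s) / 2)) * exp (-(I * s) / 2) = 1 := by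
    rw [Complex.star_def, conj_mul', norm_exp]
    simp
  refine ⟨c, fun x => ?_⟩
  rw [listProd_ofFn_RZenc_mul, mul_smul_comm, conjTranspose_smul_mul_mul_smul (hphase _)]
  exact hc x

/-- a single-qubit data re-uploading QNN on `d`-dimensional data, where the
`m`-th coordinate is encoded exactly `K` times via `R_Z` (so `L = K·d`), computes a
multivariate trigonometric polynomial `f(x) = Σ_{ω ∈ {-K,…,K}ᵈ} c_ω e^{i ω·x}`, with
coefficients depending only on the trainable matrices `V_j` and the observable `M`. -/
theorem stmt15 (d K L : ℕ) (hL : L = K * d) (idx : Fin L → Fin d)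
    (hidx : ∀ m : Fin d, (Finset.univ.filter fun j : Fin L => idx j = m).card = K)
    (V : Fin (L + 1) → Matrix (Fin 2) (Fin 2) ℂ) (M : Matrix (Fin 2) (Fin 2) ℂ) :
    ∃ c : (Fin d → ℤ) → ℂ,
      ∀ x : Fin d → ℝ,
        (((V 0 * (List.ofFn fun j : Fin L => RZenc (x (idx j)) * V j.succ).prod)ᴴ * M *
              (V 0 * (List.ofFn fun j : Fin L => RZenc (x (idx j)) * V j.succ).prod)) 0 0) =
          ∑ ω ∈ Finset.Icc (fun _ : Fin d => -(K : ℤ)) (fun _ : Fin d => (K : ℤ)),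
            c ω * Complex.exp (Complex.I * (∑ m : Fin d, (ω m : ℂ) * (x m : ℂ))) :=
  stmt15_general d K L idx hidx V M
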